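/- arXiv:2005.07217 — 15 statements merged into one kernel-verified Lean document; each statement's English description precedes it below -/
import Mathlib

section
/- Let R be a commutative ring with identity and let a, b ∈ R. Then the subring Δ(R)[(a,b)] of R × R generated by the diagonal Δ(R) = {(r,r) : r ∈ R} together with the element (a,b) equals {(c,d) ∈ R × R : c - d ∈ (a - b)R}. -/
/-- The subring of `R × R` generated by the diagonal together with `(a, b)`
equals `{(c, d) : c - d ∈ (a - b)R}`. -/
theorem stmt_0 (R : Type*) [CommRing R] (a b : R) (p : R × R) :
    p ∈ Subring.closure (Set.range (fun r : R => (r, r)) ∪ {(a, b)}) ↔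
      p.1 - p.2 ∈ Ideal.span {a - b} := by
  constructor
  · intro hp
    induction hp using Subring.closure_induction with
    | mem x hx =>
      rcases hx with ⟨r, rfl⟩ | hx
      · simp
      · simp only [Set.mem_singleton_iff] at hx
        subst hx
        exact Ideal.subset_span rfl
    | zero => simp
    | one => simp
    | add x y _ _ hx hy => simpa [add_sub_add_comm] using add_mem hx hy
    | neg x _ hx =>
      have : (-x).1 - (-x).2 = -(x.1 - x.2) := by simp [Prod.fst_neg, Prod.snd_neg]; ring
      rw [this]; exact neg_mem hx
    | mul x y _ _ hx hy =>
      have : (x * y).1 - (x * y).2 = x.1 * (y.1 - y.2) + (x.1 - x.2) * y.2 := by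
        simp [Prod.fst_mul, Prod.snd_mul]; ring
      rw [this]
      exact add_mem (Ideal.mul_mem_left _ _ hy) (Ideal.mul_mem_right _ _ hx)
  · intro hp
    rw [Ideal.mem_span_singleton] at hp
    obtain ⟨r, hr⟩ := hp
    have hd : ∀ s : R, ((s, s) : R × R) ∈
        Subring.closure (Set.range (fun r : R => (r, r)) ∪ {(a, b)}) := fun s =>
      Subring.subset_closure (Or.inl ⟨s, rfl⟩)
    have hab : ((a, b) : R × R) ∈
        Subring.closure (Set.range (fun r : R => (r, r)) ∪ {(a, b)}) :=
      Subring.subset_closure (Or.inr rfl)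
    have : p = (p.2, p.2) + (r, r) * ((a, b) - (b, b)) := by
      apply Prod.ext <;> simp [mul_comm] <;> linear_combination hr
    rw [this]
    exact add_mem (hd _) (mul_mem (hd _) (sub_mem hab (hd _)))
end

section
/- Let R be a commutative ring with identity and let a, b ∈ R. The ring extension Δ(R)[(a,b)] ⊂ R × R is a minimal ring extension (i.e., Δ(R)[(a,b)] is a proper subring of R × R with no subring strictly between them) if and only if the principal ideal (a - b)R is a maximal ideal of R. -/
/-!
The subring generated by the diagonal and `(a, b)` consists of the pairs `(x, y)` with
`x - y ∈ (a - b)R`. More generally, `I ↦ {(x, y) | x - y ∈ I}` is an order isomorphism from the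
ideals of `R` onto the subrings of `R × R` containing the diagonal, with inverse
`S ↦ {d | (d, 0) ∈ S}`; so coatoms on one side correspond to coatoms on the other.
-/

section

variable {R : Type*} [CommRing R]

def Ideal.diagSubring (I : Ideal R) : Subring (R × R) :=
  RingHom.eqLocus ((Quotient.mk I).comp (RingHom.fst R R)) ((Quotient.mk I).comp (RingHom.snd R R))

theorem Ideal.mem_diagSubring {I : Ideal R} {p : R × R} : p ∈ I.diagSubring ↔ p.1 - p.2 ∈ I :=
  Quotient.eq

theorem Ideal.diag_mem_diagSubring (I : Ideal R) (r : R) : (r, r) ∈ I.diagSubring := by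
  simp [mem_diagSubring]

theorem Ideal.diagSubring_mono : Monotone (Ideal.diagSubring (R := R)) :=
  fun _ _ hIJ _ hp => mem_diagSubring.2 (hIJ (mem_diagSubring.1 hp))

theorem closure_diag_union_singleton_eq_diagSubring (a b : R) :
    Subring.closure (Set.range (fun r : R => (r, r)) ∪ {(a, b)}) =
      (Ideal.span {a - b}).diagSubring := by
  refine le_antisymm (Subring.closure_le.2 ?_) fun ⟨x, y⟩ hxy => ?_
  · rintro p (⟨r, rfl⟩ | rfl)
    · exact Ideal.diag_mem_diagSubring _ r
    · exact Ideal.mem_diagSubring.2 (Ideal.subset_span rfl)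
  · obtain ⟨s, hs⟩ := Ideal.mem_span_singleton'.1 (Ideal.mem_diagSubring.1 hxy)
    have hdiag (r : R) : (r, r) ∈ Subring.closure (Set.range (fun r : R => (r, r)) ∪ {(a, b)}) :=
      Subring.subset_closure (Or.inl ⟨r, rfl⟩)
    have hab : (a, b) ∈ Subring.closure (Set.range (fun r : R => (r, r)) ∪ {(a, b)}) :=
      Subring.subset_closure (Or.inr rfl)
    have hxy : ((x, y) : R × R) = (y - s * b, y - s * b) + (s, s) * (a, b) := by
      refine Prod.ext ?_ (sub_add_cancel y (s * b)).symm
      show x = y - s * b + s * a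
      linear_combination -hs
    rw [hxy]
    exact add_mem (hdiag _) (mul_mem (hdiag s) hab)

def Subring.fstIdeal (S : Subring (R × R)) (hS : (⊥ : Ideal R).diagSubring ≤ S) : Ideal R where
  carrier := {d | (d, 0) ∈ S}
  zero_mem' := S.zero_mem
  add_mem' hc hd := by simpa using S.add_mem hc hd
  smul_mem' c d hd := by simpa using S.mul_mem (hS (Ideal.diag_mem_diagSubring ⊥ c)) hd

theorem Subring.mem_fstIdeal {S : Subring (R × R)} {hS : (⊥ : Ideal R).diagSubring ≤ S} {d : R} :
    d ∈ S.fstIdeal hS ↔ (d, 0) ∈ S :=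
  Iff.rfl

def Ideal.diagSubringOrderIso : Ideal R ≃o Set.Ici (⊥ : Ideal R).diagSubring where
  toFun I := ⟨I.diagSubring, diagSubring_mono bot_le⟩
  invFun S := S.1.fstIdeal S.2
  left_inv I := by
    ext d
    show (d, 0) ∈ I.diagSubring ↔ d ∈ I
    simp [mem_diagSubring]
  right_inv := fun ⟨S, hS⟩ => by
    refine Subtype.ext (SetLike.ext fun p => ?_)
    have hp : (p.1 - p.2, 0) + (p.2, p.2) = p := by ext <;> simp
    show p ∈ (S.fstIdeal hS).diagSubring ↔ p ∈ S
    rw [mem_diagSubring]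
    change (p.1 - p.2, 0) ∈ S ↔ p ∈ S
    rw [← add_mem_cancel_right (hS (diag_mem_diagSubring ⊥ p.2)), hp]
  map_rel_iff' {I J} := by
    refine ⟨fun h d hd => ?_, fun h => diagSubring_mono h⟩
    have hd0 : (d, 0) ∈ I.diagSubring := mem_diagSubring.2 (by simpa using hd)
    simpa [mem_diagSubring] using h hd0

theorem Ideal.isCoatom_diagSubring_iff {I : Ideal R} : IsCoatom I.diagSubring ↔ I.IsMaximal := by
  rw [isMaximal_def, ← diagSubringOrderIso.isCoatom_iff]
  exact ⟨fun h => h.Ici _, IsCoatom.of_isCoatom_coe_Ici⟩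

end

/-- `Δ(R)[(a,b)] ⊂ R × R` is a minimal ring extension (i.e. a maximal subring)
iff the principal ideal `(a - b)R` is maximal. -/
theorem stmt_1 (R : Type*) [CommRing R] (a b : R) :
    IsCoatom (Subring.closure (Set.range (fun r : R => (r, r)) ∪ {(a, b)})) ↔
      (Ideal.span {a - b}).IsMaximal := by
  rw [closure_diag_union_singleton_eq_diagSubring, Ideal.isCoatom_diagSubring_iff]
end

section
/- Let R be a commutative ring with identity and a, b ∈ R. Then Δ(R)[(a,b)] = R × R if and only if a - b is a unit of R. -/
/-- `Δ(R)[(a,b)] = R × R` iff `a - b` is a unit. -/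
theorem stmt_2 (R : Type*) [CommRing R] (a b : R) :
    Subring.closure (Set.range (fun r : R => (r, r)) ∪ {(a, b)}) = (⊤ : Subring (R × R)) ↔
      IsUnit (a - b) := by
  constructor
  · intro h
    let S : Subring (R × R) :=
      { carrier := {p | p.1 - p.2 ∈ Ideal.span {a - b}}
        zero_mem' := by simp
        one_mem' := by simp
        add_mem' := by
          intro p q hp hq
          have : (p + q).1 - (p + q).2 = (p.1 - p.2) + (q.1 - q.2) := by
            simp [Prod.fst_add, Prod.snd_add]; ring
          show (p+q).1-(p+q).2 ∈ Ideal.span {a-b}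
          rw [this]; exact Ideal.add_mem _ hp hq
        neg_mem' := by
          intro p hp
          have : (-p).1 - (-p).2 = -(p.1 - p.2) := by simp; ring
          show (-p).1-(-p).2 ∈ Ideal.span {a-b}
          rw [this]; exact Submodule.neg_mem _ hp
        mul_mem' := by
          intro p q hp hq
          have : (p * q).1 - (p * q).2 = p.1 * (q.1 - q.2) + q.2 * (p.1 - p.2) := by
            simp [Prod.fst_mul, Prod.snd_mul]; ring
          simp only [Set.mem_setOf_eq, this]
          exact Ideal.add_mem _ (Ideal.mul_mem_left _ _ hq) (Ideal.mul_mem_left _ _ hp) }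
    have hle : Subring.closure (Set.range (fun r : R => (r, r)) ∪ {(a, b)}) ≤ S := by
      apply Subring.closure_le.mpr
      rintro p (⟨r, rfl⟩ | rfl)
      · show r - r ∈ Ideal.span {a - b}
        simp
      · exact Ideal.subset_span rfl
    have h10 : ((1 : R), (0 : R)) ∈ S := hle (h ▸ Subring.mem_top _)
    have h1 : (1:R) - 0 ∈ Ideal.span {a-b} := h10
    have : (1 : R) ∈ Ideal.span {a - b} := by simpa using h1
    rw [Ideal.mem_span_singleton] at this
    exact isUnit_of_dvd_one this
  · rintro ⟨u, hu⟩
    rw [eq_top_iff]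
    rintro ⟨x, y⟩ -
    set c := Subring.closure (Set.range (fun r : R => (r, r)) ∪ {(a, b)}) with hc
    have hd : ∀ r : R, ((r, r) : R × R) ∈ c := fun r =>
      Subring.subset_closure (Or.inl ⟨r, rfl⟩)
    have hab : ((a, b) : R × R) ∈ c := Subring.subset_closure (Or.inr rfl)
    have key : ((x - y, 0) : R × R) ∈ c := by
      have hm : (((x - y) * ↑u⁻¹, (x - y) * ↑u⁻¹) : R × R) * ((a, b) - (b, b)) ∈ c :=
        Subring.mul_mem _ (hd _) (Subring.sub_mem _ hab (hd b))
      have : (((x - y) * ↑u⁻¹, (x - y) * ↑u⁻¹) : R × R) * ((a, b) - (b, b)) = (x - y, 0) := by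
        have h1 : (x - y) * ↑u⁻¹ * (a - b) = x - y := by
          rw [← hu, mul_assoc, Units.inv_mul, mul_one]
        ext <;> simp [Prod.fst_mul, Prod.snd_mul, h1]
      rw [this] at hm
      exact hm
    have := Subring.add_mem _ key (hd y)
    simpa using this
end

section
/- Let R be a commutative ring with identity and let b ∈ R. Then the subring R(+)Rb of the idealization R(+)R is a maximal subring of R(+)R (equivalently, R(+)Rb ⊂ R(+)R is a minimal ring extension) if and only if the principal ideal Rb is a maximal ideal of R. -/
open TrivSqZeroExt in
/-- The subring `R(+)I` of the idealization `R(+)R`. -/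
def idealize (R : Type*) [CommRing R] (I : Ideal R) : Subring (TrivSqZeroExt R R) where
  carrier := {x | x.snd ∈ I}
  zero_mem' := by simp
  one_mem' := by simp
  add_mem' := by intro x y hx hy; simpa using I.add_mem hx hy
  neg_mem' := by intro x hx; simpa using I.neg_mem hx
  mul_mem' := by
    intro x y hx hy
    simp only [Set.mem_setOf_eq, TrivSqZeroExt.snd_mul, op_smul_eq_smul] at *
    exact I.add_mem (I.smul_mem _ hy) (I.smul_mem _ hx)

open TrivSqZeroExt

lemma mem_idealize {R : Type*} [CommRing R] {I : Ideal R} {x : TrivSqZeroExt R R} :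
    x ∈ idealize R I ↔ x.snd ∈ I := Iff.rfl

lemma inl_mem_idealize {R : Type*} [CommRing R] {I : Ideal R} (r : R) :
    (inl r : TrivSqZeroExt R R) ∈ idealize R I := by
  simp [mem_idealize]

lemma idealize_le_iff {R : Type*} [CommRing R] {I J : Ideal R} :
    idealize R I ≤ idealize R J ↔ I ≤ J := by
  constructor
  · intro h m hm
    have hmem : (inr m : TrivSqZeroExt R R) ∈ idealize R I := by simpa [mem_idealize] using hm
    simpa [mem_idealize] using h hmem
  · intro h x hx
    exact h hx

lemma idealize_eq_top_iff {R : Type*} [CommRing R] {I : Ideal R} :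
    idealize R I = ⊤ ↔ I = ⊤ := by
  constructor
  · intro h
    rw [Ideal.eq_top_iff_one]
    have hmem : (inr (1 : R) : TrivSqZeroExt R R) ∈ idealize R I := by
      rw [h]; trivial
    simpa [mem_idealize] using hmem
  · intro h
    ext x
    simp [mem_idealize, h]

lemma exists_ideal_of_le {R : Type*} [CommRing R] {I : Ideal R}
    {S : Subring (TrivSqZeroExt R R)} (hS : idealize R I ≤ S) :
    ∃ J : Ideal R, I ≤ J ∧ S = idealize R J := by
  refine ⟨{ carrier := {m | (inr m : TrivSqZeroExt R R) ∈ S}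
            zero_mem' := by simpa using S.zero_mem
            add_mem' := by
              intro a b ha hb
              show (inr (a + b) : TrivSqZeroExt R R) ∈ S
              rw [inr_add]
              exact S.add_mem ha hb
            smul_mem' := by
              intro r m hm
              have h1 : (inl r : TrivSqZeroExt R R) ∈ S := hS (inl_mem_idealize r)
              show (inr (r • m) : TrivSqZeroExt R R) ∈ S
              rw [← inl_mul_inr]
              exact S.mul_mem h1 hm }, ?_, ?_⟩
  · intro m hm
    exact hS (show (inr m : TrivSqZeroExt R R) ∈ idealize R I by simpa [mem_idealize] using hm)
  · ext x
    have h1 : (inl x.fst : TrivSqZeroExt R R) ∈ S := hS (inl_mem_idealize _)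
    constructor
    · intro hx
      show (inr x.snd : TrivSqZeroExt R R) ∈ S
      have h2 : x - inl x.fst ∈ S := S.sub_mem hx h1
      have heq : x - inl x.fst = inr x.snd := by
        ext <;> simp
      rwa [heq] at h2
    · intro hx
      have h2 : (inr x.snd : TrivSqZeroExt R R) ∈ S := hx
      have h3 := S.add_mem h1 h2
      rwa [inl_fst_add_inr_snd_eq] at h3

lemma isCoatom_idealize_iff {R : Type*} [CommRing R] {I : Ideal R} :
    IsCoatom (idealize R I) ↔ IsCoatom I := by
  constructor
  · intro h
    constructor
    · intro hI
      exact h.1 (idealize_eq_top_iff.mpr hI)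
    · intro J hIJ
      have hlt : idealize R I < idealize R J :=
        lt_of_le_of_ne (idealize_le_iff.mpr hIJ.le)
          (fun he => hIJ.ne (le_antisymm hIJ.le (idealize_le_iff.mp he.ge)))
      exact idealize_eq_top_iff.mp (h.2 _ hlt)
  · intro h
    constructor
    · intro hI
      exact h.1 (idealize_eq_top_iff.mp hI)
    · intro S hS
      obtain ⟨J, hIJ, rfl⟩ := exists_ideal_of_le hS.le
      have hlt : I < J :=
        lt_of_le_of_ne hIJ (fun he => hS.ne (by rw [he]))
      rw [idealize_eq_top_iff]
      exact h.2 _ hlt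

/-- `R(+)Rb` is a maximal subring of `R(+)R` iff `Rb` is a maximal ideal of `R`. -/
theorem stmt_3 (R : Type*) [CommRing R] (b : R) :
    IsCoatom (idealize R (Ideal.span {b})) ↔ (Ideal.span {b}).IsMaximal := by
  rw [isCoatom_idealize_iff, Ideal.isMaximal_def]
end

section
/- Let R be a commutative ring with identity. The image of R under the canonical embedding r ↦ (r, 0) is a maximal subring of the idealization R(+)R if and only if R is a field. -/
open TrivSqZeroExt

private lemma mem_inlHom_range {R : Type*} [CommRing R] (z : TrivSqZeroExt R R) :
    z ∈ ((TrivSqZeroExt.inlHom R R).range : Subring (TrivSqZeroExt R R)) ↔ z.snd = 0 := by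
  constructor
  · rintro ⟨r, rfl⟩; simp [inlHom]
  · intro h
    exact ⟨z.fst, by ext <;> simp [inlHom, h]⟩

/-- subring corresponding to an ideal -/
private def subOf {R : Type*} [CommRing R] (I : Ideal R) : Subring (TrivSqZeroExt R R) where
  carrier := {z | z.snd ∈ I}
  add_mem' {a b} ha hb := by simpa [snd_add] using I.add_mem ha hb
  mul_mem' {a b} ha hb := by
    simp only [Set.mem_setOf_eq, snd_mul] at *
    rw [smul_eq_mul, op_smul_eq_smul, smul_eq_mul]
    exact I.add_mem (I.mul_mem_left _ hb) (I.mul_mem_left _ ha)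
  one_mem' := by simp [snd_one]
  zero_mem' := by simp
  neg_mem' {a} ha := by simpa [snd_neg] using I.neg_mem ha

private lemma mem_subOf {R : Type*} [CommRing R] {I : Ideal R} {z : TrivSqZeroExt R R} :
    z ∈ subOf I ↔ z.snd ∈ I := Iff.rfl

/-- The image of `R` in the idealization `R(+)R` (under `r ↦ (r,0)`) is a maximal
subring of `R(+)R` iff `R` is a field. -/
theorem stmt_5 (R : Type*) [CommRing R] :
    IsCoatom ((TrivSqZeroExt.inlHom R R).range : Subring (TrivSqZeroExt R R)) ↔
      IsField R := by
  constructor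
  · rintro ⟨hne, hmax⟩
    have hnt : Nontrivial R := by
      by_contra h
      rw [not_nontrivial_iff_subsingleton] at h
      exact hne ((Subring.eq_top_iff' _).2 fun x => (mem_inlHom_range x).2 (Subsingleton.elim _ _))
    refine ⟨exists_pair_ne R, mul_comm, fun {a} ha => ?_⟩
    have hsub : ((TrivSqZeroExt.inlHom R R).range : Subring (TrivSqZeroExt R R)) <
        subOf (Ideal.span {a}) := by
      rw [SetLike.lt_iff_le_and_exists]
      refine ⟨fun z hz => ?_, inr a, ?_, ?_⟩
      · rw [mem_inlHom_range] at hz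
        rw [mem_subOf, hz]; exact Ideal.zero_mem _
      · rw [mem_subOf]
        simp [Ideal.mem_span_singleton_self]
      · rw [mem_inlHom_range]
        simpa using ha
    have htop := hmax _ hsub
    have : (inr 1 : TrivSqZeroExt R R) ∈ subOf (Ideal.span {a}) := by
      rw [htop]; trivial
    rw [mem_subOf] at this
    have h1 : (1 : R) ∈ Ideal.span {a} := by simpa using this
    rw [Ideal.mem_span_singleton'] at h1
    obtain ⟨b, hb⟩ := h1
    exact ⟨b, by rw [mul_comm]; exact hb⟩
  · intro hF
    have hnt : Nontrivial R := ⟨hF.exists_pair_ne⟩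
    constructor
    · intro htop
      have : (inr 1 : TrivSqZeroExt R R) ∈ ((TrivSqZeroExt.inlHom R R).range :
          Subring (TrivSqZeroExt R R)) := htop ▸ trivial
      rw [mem_inlHom_range] at this
      simp at this
    · intro S hS
      obtain ⟨x, hxS, hxr⟩ := SetLike.exists_of_lt hS
      rw [mem_inlHom_range] at hxr
      have hinl : (inl x.fst : TrivSqZeroExt R R) ∈ S :=
        hS.le ((mem_inlHom_range _).2 (by simp))
      have hinr : (inr x.snd : TrivSqZeroExt R R) ∈ S := by
        have := S.sub_mem hxS hinl
        have heq : x - inl x.fst = inr x.snd := by ext <;> simp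
        rwa [heq] at this
      obtain ⟨b, hb⟩ := hF.mul_inv_cancel hxr
      have h1 : (inr 1 : TrivSqZeroExt R R) ∈ S := by
        have := S.mul_mem (hS.le ((mem_inlHom_range (inl b)).2 (by simp))) hinr
        rwa [inl_mul_inr, smul_eq_mul, mul_comm, hb] at this
      rw [eq_top_iff]
      intro z _
      have : z = inl z.fst + inl z.snd * inr 1 := by
        rw [inl_mul_inr, smul_eq_mul, mul_one, inl_fst_add_inr_snd_eq]
      rw [this]
      exact S.add_mem (hS.le ((mem_inlHom_range _).2 (by simp)))
        (S.mul_mem (hS.le ((mem_inlHom_range _).2 (by simp))) h1)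
end

section
/- Let R be a commutative ring with identity. Every subring of the idealization R(+)R that contains R × {0} is of the form R(+)I := {(r, x) : r ∈ R, x ∈ I} for a unique ideal I of R. -/
/-- Every subring of `R(+)R` containing `R × {0}` is `R(+)I` for a unique ideal `I`. -/
theorem stmt_6 (R : Type*) [CommRing R] (S : Subring (TrivSqZeroExt R R))
    (hS : ((TrivSqZeroExt.inlHom R R).range : Subring (TrivSqZeroExt R R)) ≤ S) :
    ∃! I : Ideal R, S = idealize R I := by
  have hinl : ∀ r : R, TrivSqZeroExt.inl r ∈ S := fun r => hS ⟨r, rfl⟩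
  refine ⟨{ carrier := {x : R | TrivSqZeroExt.inr x ∈ S}
            zero_mem' := by simpa using S.zero_mem
            add_mem' := fun hx hy => by
              show TrivSqZeroExt.inr _ ∈ S
              rw [TrivSqZeroExt.inr_add]
              exact S.add_mem hx hy
            smul_mem' := fun c x hx => by
              show TrivSqZeroExt.inr (c • x) ∈ S
              rw [← TrivSqZeroExt.inl_mul_inr]
              exact S.mul_mem (hinl c) hx }, ?_, ?_⟩
  · ext x
    have hx : x = TrivSqZeroExt.inl x.fst + TrivSqZeroExt.inr x.snd := by
      ext <;> simp
    constructor
    · intro h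
      have hxe : x - TrivSqZeroExt.inl x.fst = TrivSqZeroExt.inr x.snd := by
        ext <;> simp
      have : TrivSqZeroExt.inr x.snd ∈ S := hxe ▸ S.sub_mem h (hinl x.fst)
      exact this
    · intro h
      have h2 : TrivSqZeroExt.inr x.snd ∈ S := h
      rw [hx]
      exact S.add_mem (hinl x.fst) h2
  · intro J hJ
    ext x
    subst hJ
    show x ∈ J ↔ (TrivSqZeroExt.inr (R:=R) x).snd ∈ J
    rw [TrivSqZeroExt.snd_inr]
end

section
/- Let R ⊂ T be a minimal ring extension of commutative rings where R is von Neumann regular and T is reduced. Then T is integral over R and T is von Neumann regular. -/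
/-!
For `a ∈ T`, minimality applied to the subring `R + a²T` gives either `a² ∈ R`, so that
`a² = a⁴x` and `(a - a³x)² = 0` force `a = a³x` in the reduced ring `T`, or `a = r + a²u` with
`r ∈ R`, and a von Neumann inverse of `r` yields one of `a`.

Likewise `R[t²]` is `R` or `T`, so `t² ∈ R` or `t = p(t²)` for some `p ∈ R[X]`. In the second case
let `c = c²x` be the leading coefficient of `p` and `e = cx`, an idempotent. Then `et = x(ct)` is
integral because `t` is a root of `p(X²) - X`, whose leading coefficient is `c`; and `(1 - e)t` is a
root of the same kind of equation for `(1 - e)p`, which has smaller degree since `(1 - e)c = 0`.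
-/

open Polynomial

def IsVonNeumannRegular (R : Type*) [CommRing R] : Prop :=
  ∀ a : R, ∃ x : R, a = a * a * x

theorem Polynomial.smul_aeval_smul_of_isIdempotentElem {R S : Type*} [CommRing R] [CommRing S]
    [Algebra R S] {f : R} (hf : IsIdempotentElem f) (p : R[X]) (y : S) :
    f • aeval (f • y) p = f • aeval y p := by
  induction p using Polynomial.induction_on with
  | C a => simp
  | add p q hp hq => simp only [map_add, smul_add, hp, hq]
  | monomial n a _ =>
    have hf' : algebraMap R S f * algebraMap R S f ^ (n + 1) = algebraMap R S f := by
      rw [← pow_succ', (hf.map (algebraMap R S)).pow_succ_eq]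
    simp only [map_mul, aeval_C, aeval_X, map_pow, Algebra.smul_def, mul_pow]
    linear_combination (algebraMap R S a * y ^ (n + 1)) * hf'

theorem Polynomial.natDegree_C_mul_lt_of_mul_leadingCoeff_eq_zero {R : Type*} [CommRing R]
    {f : R} {p : R[X]} (hf : f * p.leadingCoeff = 0) (hp : p.natDegree ≠ 0) :
    (C f * p).natDegree < p.natDegree := by
  have := natDegree_le_pred (natDegree_C_mul_le f p) (by rwa [coeff_C_mul])
  omega

theorem Polynomial.leadingCoeff_expand_two_sub_X {R : Type*} [CommRing R] {p : R[X]}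
    (hp : p.natDegree ≠ 0) : (expand R 2 p - X).leadingCoeff = p.leadingCoeff := by
  have hp0 : p ≠ 0 := by rintro rfl; simp at hp
  rw [leadingCoeff_sub_of_degree_lt, leadingCoeff_expand two_pos]
  rw [degree_eq_natDegree ((expand_ne_zero two_pos).mpr hp0), natDegree_expand]
  refine degree_X_le.trans_lt ?_
  exact_mod_cast (by omega : 1 < p.natDegree * 2)

theorem isIntegral_of_aeval_sq_eq_self {R S : Type*} [CommRing R] [CommRing S] [Algebra R S]
    (hR : IsVonNeumannRegular R) (p : R[X]) (t : S) (hp : aeval (t ^ 2) p = t) :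
    IsIntegral R t := by
  induction h : p.natDegree using Nat.strong_induction_on generalizing p t with
  | _ n ih =>
  subst h
  by_cases hdeg : p.natDegree = 0
  · rw [eq_C_of_natDegree_eq_zero hdeg, aeval_C] at hp
    exact hp ▸ isIntegral_algebraMap
  obtain ⟨x, hx⟩ := hR p.leadingCoeff
  set c := p.leadingCoeff
  have he : IsIdempotentElem (c * x) := by
    unfold IsIdempotentElem; linear_combination (-x) * hx
  have h_e : IsIntegral R ((c * x) • t) := by
    have hroot : aeval t (expand R 2 p - X) = 0 := by simp [hp]
    have := (isIntegral_leadingCoeff_smul _ t hroot).smul x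
    rwa [leadingCoeff_expand_two_sub_X hdeg, smul_smul, mul_comm] at this
  have h_one_sub_e : IsIntegral R ((1 - c * x) • t) := by
    refine ih _ (natDegree_C_mul_lt_of_mul_leadingCoeff_eq_zero ?_ hdeg) (C (1 - c * x) * p) _ ?_ rfl
    · linear_combination hx
    · rw [_root_.smul_pow, he.one_sub.pow_succ_eq, map_mul, aeval_C, ← Algebra.smul_def,
        smul_aeval_smul_of_isIdempotentElem he.one_sub, hp]
  simpa [← add_smul] using h_e.add h_one_sub_e

namespace Subring

variable {T : Type*} [CommRing T] {R : Subring T}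

theorem subset_or_forall_exists_sub_mem_of_isCoatom (hR : IsCoatom R) (I : Ideal T) :
    (I : Set T) ⊆ R ∨ ∀ v : T, ∃ r ∈ R, v - r ∈ I := by
  -- `R + I` is the preimage of the image of `R` in `T ⧸ I`.
  set S := (R.map (Ideal.Quotient.mk I)).comap (Ideal.Quotient.mk I)
  have hmem : ∀ v, v ∈ S ↔ ∃ r ∈ R, v - r ∈ I := fun v => by
    simp only [S, Subring.mem_comap, Subring.mem_map, Ideal.Quotient.eq]
    exact exists_congr fun r => and_congr_right fun _ => sub_mem_comm_iff
  rcases hR.le_iff.mp (fun r hr => (hmem r).mpr ⟨r, hr, by simp⟩ : R ≤ S) with htop | heq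
  · exact Or.inr fun v => (hmem v).mp (htop ▸ Subring.mem_top v)
  · exact Or.inl fun v hv => heq ▸ (hmem v).mpr ⟨0, R.zero_mem, by simpa using hv⟩

theorem sq_mem_or_mem_adjoin_sq_of_isCoatom (hR : IsCoatom R) (t : T) :
    t ^ 2 ∈ R ∨ t ∈ Algebra.adjoin R {t ^ 2} := by
  have hle : R ≤ (Algebra.adjoin R {t ^ 2}).toSubring := fun r hr =>
    Subalgebra.algebraMap_mem _ (⟨r, hr⟩ : R)
  rcases hR.le_iff.mp hle with htop | heq
  · exact Or.inr (htop ▸ Subring.mem_top t : t ∈ (Algebra.adjoin R {t ^ 2}).toSubring)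
  · exact Or.inl (heq ▸ Algebra.subset_adjoin rfl)

theorem isVonNeumannRegular_of_isCoatom [IsReduced T] (hR : IsCoatom R)
    (hvnr : IsVonNeumannRegular R) : IsVonNeumannRegular T := by
  intro a
  rcases subset_or_forall_exists_sub_mem_of_isCoatom hR (Ideal.span {a * a}) with hsub | hsum
  · obtain ⟨x, hx⟩ := hvnr ⟨a * a, hsub (Ideal.subset_span rfl)⟩
    have hx' : a * a = a * a * (a * a) * x := congrArg Subtype.val hx
    have hnil : (a - a * a * (a * x)) ^ 2 = 0 := by
      linear_combination (1 - a * a * x) * hx'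
    exact ⟨a * x, by linear_combination IsReduced.eq_zero _ ⟨2, hnil⟩⟩
  · obtain ⟨r, hr, hra⟩ := hsum a
    obtain ⟨u, hu⟩ := Ideal.mem_span_singleton'.mp hra
    obtain ⟨y, hy⟩ := hvnr ⟨r, hr⟩
    have hy' : r = r * r * y := congrArg Subtype.val hy
    -- `a (1 - a u) = r` and `r = r² y` give `a² (1 - a u)² y = r`.
    exact ⟨(1 - a * u) ^ 2 * y + u, by linear_combination hy' + ((r + a - a * a * u) * y - 1) * hu⟩

end Subring

/-- If `R ⊂ T` is a minimal ring extension with `R` von Neumann regular and `T` reduced,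
then `T` is integral over `R` and `T` is von Neumann regular. -/
theorem stmt_8 (T : Type*) [CommRing T] (R : Subring T)
    (hmin : IsCoatom R)
    (hvnr : ∀ a : R, ∃ x : R, a = a * a * x)
    (hred : IsReduced T) :
    Algebra.IsIntegral R T ∧ ∀ a : T, ∃ x : T, a = a * a * x := by
  refine ⟨⟨fun t => ?_⟩, Subring.isVonNeumannRegular_of_isCoatom hmin hvnr⟩
  rcases Subring.sq_mem_or_mem_adjoin_sq_of_isCoatom hmin t with hsq | hadj
  · exact (isIntegral_algebraMap (x := (⟨t ^ 2, hsq⟩ : R))).of_pow two_pos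
  · rw [Algebra.adjoin_singleton_eq_range_aeval] at hadj
    obtain ⟨p, hp⟩ := hadj
    exact isIntegral_of_aeval_sq_eq_self hvnr p t hp
end

section
/- The extension ℤ ⊂ ℤ[1/2] is a minimal ring extension: ℤ[1/2] properly contains ℤ and there is no subring S with ℤ ⊊ S ⊊ ℤ[1/2]. -/
/-!
Every element of the subring of `ℚ` generated by `p⁻¹` has a power of `p` as denominator. If a
subring `S` of it contains a non-integer `x`, then `x.den = p ^ k` with `k ≥ 1`; Bézout for the
coprime pair `x.num, x.den` gives `u * x + v = (p ^ k)⁻¹ ∈ S`, hence `p⁻¹ = p ^ (k - 1) / p ^ k ∈ S`.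
-/

namespace Rat

theorem mem_bot_subring_iff_den_eq_one {x : ℚ} : x ∈ (⊥ : Subring ℚ) ↔ x.den = 1 :=
  ⟨fun ⟨n, hn⟩ ↦ hn ▸ den_intCast n, fun h ↦ ⟨x.num, coe_int_num_of_den_eq_one h⟩⟩

theorem exists_den_dvd_pow_of_mem_closure_inv (d : ℕ) {x : ℚ}
    (hx : x ∈ Subring.closure {(d : ℚ)⁻¹}) : ∃ n, x.den ∣ d ^ n := by
  induction hx using Subring.closure_induction with
  | mem y hy =>
    rw [Set.mem_singleton_iff] at hy
    refine ⟨1, ?_⟩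
    rw [hy, inv_natCast_den]
    split_ifs <;> simp
  | zero => exact ⟨0, by simp⟩
  | one => exact ⟨0, by simp⟩
  | neg y _ hy => simpa only [neg_den] using hy
  | add y z _ _ hy hz =>
    obtain ⟨m, hm⟩ := hy
    obtain ⟨n, hn⟩ := hz
    exact ⟨m + n, (add_den_dvd y z).trans (pow_add d m n ▸ mul_dvd_mul hm hn)⟩
  | mul y z _ _ hy hz =>
    obtain ⟨m, hm⟩ := hy
    obtain ⟨n, hn⟩ := hz
    exact ⟨m + n, (mul_den_dvd y z).trans (pow_add d m n ▸ mul_dvd_mul hm hn)⟩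

end Rat

namespace Subring

open Rat

theorem inv_den_mem {S : Subring ℚ} {x : ℚ} (hx : x ∈ S) : (x.den : ℚ)⁻¹ ∈ S := by
  obtain ⟨u, v, huv⟩ : IsCoprime x.num x.den := Int.isCoprime_iff_gcd_eq_one.mpr x.reduced
  have hbezout : (x.den : ℚ)⁻¹ = u * x + v := by
    have huvℚ : (u : ℚ) * x.num + v * x.den = 1 := by exact_mod_cast huv
    rw [← x.mul_den_eq_num] at huvℚ
    field_simp
    linear_combination -huvℚ
  rw [hbezout]
  exact S.add_mem (S.mul_mem (intCast_mem S u) hx) (intCast_mem S v)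

theorem inv_prime_not_mem_bot {p : ℕ} (hp : p.Prime) : (p : ℚ)⁻¹ ∉ (⊥ : Subring ℚ) := by
  rw [mem_bot_subring_iff_den_eq_one, inv_natCast_den, if_neg hp.ne_zero]
  exact hp.ne_one

theorem bot_lt_closure_inv_prime {p : ℕ} (hp : p.Prime) :
    (⊥ : Subring ℚ) < closure {(p : ℚ)⁻¹} :=
  bot_le.lt_of_ne fun h ↦ inv_prime_not_mem_bot hp (h ▸ subset_closure rfl)

theorem eq_bot_or_eq_closure_inv_prime {p : ℕ} (hp : p.Prime) {S : Subring ℚ}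
    (hS : S ≤ closure {(p : ℚ)⁻¹}) : S = ⊥ ∨ S = closure {(p : ℚ)⁻¹} := by
  by_cases hbot : S ≤ ⊥
  · exact .inl (le_bot_iff.mp hbot)
  refine .inr (hS.antisymm (closure_le.mpr (Set.singleton_subset_iff.mpr ?_)))
  obtain ⟨x, hxS, hx⟩ := SetLike.not_le_iff_exists.mp hbot
  obtain ⟨n, hn⟩ := exists_den_dvd_pow_of_mem_closure_inv p (hS hxS)
  obtain ⟨k, -, hk⟩ := (Nat.dvd_prime_pow hp).mp hn
  have hk0 : k ≠ 0 := by
    rintro rfl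
    exact hx (mem_bot_subring_iff_den_eq_one.mpr (by simpa using hk))
  have hp0 : (p : ℚ) ≠ 0 := by exact_mod_cast hp.ne_zero
  have hinv : (p : ℚ)⁻¹ = p ^ (k - 1) * (x.den : ℚ)⁻¹ := by
    rw [hk, Nat.cast_pow, ← Nat.sub_add_cancel (Nat.one_le_iff_ne_zero.mpr hk0)]
    field_simp
    exact pow_succ' _ _
  rw [hinv]
  exact S.mul_mem (S.pow_mem (natCast_mem S p) _) (inv_den_mem hxS)

end Subring

/-- `ℤ ⊂ ℤ[1/2]` is a minimal ring extension: viewing `ℤ[1/2]` as the subring of `ℚ`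
generated by `1/2`, the prime subring `ℤ` (i.e. `⊥`) is proper in it and there is no
intermediate subring. -/
theorem stmt_9 :
    (⊥ : Subring ℚ) < Subring.closure {(1 : ℚ) / 2} ∧
      ∀ S : Subring ℚ, S ≤ Subring.closure {(1 : ℚ) / 2} →
        S = ⊥ ∨ S = Subring.closure {(1 : ℚ) / 2} := by
  have h : (1 : ℚ) / 2 = ((2 : ℕ) : ℚ)⁻¹ := by norm_num
  rw [h]
  exact ⟨Subring.bot_lt_closure_inv_prime Nat.prime_two,
    fun _ ↦ Subring.eq_bot_or_eq_closure_inv_prime Nat.prime_two⟩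
end

section
/- Let R ⊂ T be a minimal ring extension of commutative rings with T an integral domain and R a local ring with maximal ideal J. If the conductor (R : T) = 0 and J ≠ 0, then R is a one-dimensional valuation domain and T is its field of fractions. -/
open Polynomial
set_option linter.unusedSectionVars false
open Polynomial

section Aux
variable {T : Type*} [CommRing T] [IsDomain T]

/-- `R + N` as a subring of `T`, for `N` an ideal of `T`. -/
def stmt12AddIdeal (R : Subring T) (N : Ideal T) : Subring T where
  carrier := {x | ∃ r ∈ R, ∃ n ∈ N, x = r + n}
  one_mem' := ⟨1, R.one_mem, 0, N.zero_mem, by ring⟩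
  zero_mem' := ⟨0, R.zero_mem, 0, N.zero_mem, by ring⟩
  add_mem' := by
    rintro a b ⟨r, hr, n, hn, rfl⟩ ⟨r', hr', n', hn', rfl⟩
    exact ⟨r + r', R.add_mem hr hr', n + n', N.add_mem hn hn', by ring⟩
  neg_mem' := by
    rintro a ⟨r, hr, n, hn, rfl⟩
    exact ⟨-r, R.neg_mem hr, -n, N.neg_mem hn, by ring⟩
  mul_mem' := by
    rintro a b ⟨r, hr, n, hn, rfl⟩ ⟨r', hr', n', hn', rfl⟩
    refine ⟨r * r', R.mul_mem hr hr', r * n' + n * r' + n * n', ?_, by ring⟩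
    exact N.add_mem (N.add_mem (N.mul_mem_left _ hn') (N.mul_mem_right _ hn)) (N.mul_mem_right _ hn)

lemma stmt12_mem_addIdeal {R : Subring T} {N : Ideal T} {x : T} :
    x ∈ stmt12AddIdeal R N ↔ ∃ r ∈ R, ∃ n ∈ N, x = r + n := Iff.rfl

lemma stmt12_le_addIdeal (R : Subring T) (N : Ideal T) : R ≤ stmt12AddIdeal R N :=
  fun r hr => ⟨r, hr, 0, N.zero_mem, by ring⟩

/-- If `x ∉ R` then every element of `T` is a polynomial in `x` over `R`. -/
lemma stmt12_adjoin {R : Subring T} (hmin : IsCoatom R) {x : T} (hx : x ∉ R) (z : T) :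
    ∃ p : Polynomial R, Polynomial.aeval x p = z := by
  have hle : R ≤ (Algebra.adjoin R {x}).toSubring := by
    intro r hr
    exact (Algebra.adjoin R {x}).algebraMap_mem ⟨r, hr⟩
  have hxmem : x ∈ (Algebra.adjoin R {x}).toSubring := by
    simpa using Algebra.subset_adjoin (Set.mem_singleton x)
  have hlt : R < (Algebra.adjoin R {x}).toSubring :=
    lt_of_le_of_ne hle (fun h => hx (h ▸ hxmem))
  have htop := hmin.2 _ hlt
  have hz : z ∈ Algebra.adjoin R {x} := by
    have : z ∈ (Algebra.adjoin R {x}).toSubring := htop ▸ Subring.mem_top z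
    simpa using this
  rw [Algebra.adjoin_singleton_eq_range_aeval] at hz
  exact hz
end Aux

section Aux2
variable {T : Type*} [CommRing T] [IsDomain T] {R : Subring T}

lemma stmt12_jac [IsLocalRing R] : (IsLocalRing.maximalIdeal R) ≤ Ideal.jacobson ⊥ := by
  rw [IsLocalRing.jacobson_eq_maximalIdeal ⊥ bot_ne_top]

/-- every integral element lies in `R` -/
lemma stmt12_int (hmin : IsCoatom R) [IsLocalRing R]
    (hcond : ∀ t : T, (∀ s : T, t * s ∈ R) → t = 0)
    (hJ : IsLocalRing.maximalIdeal R ≠ ⊥)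
    {x : T} (hx : IsIntegral R x) : x ∈ R := by
  by_contra hxR
  set J := IsLocalRing.maximalIdeal R with hJdef
  set NT : Ideal T := Ideal.span ((↑) '' (J : Set R)) with hNT
  have hTmul : ∀ (t a : T), a ∈ J • (⊤ : Submodule R T) → t * a ∈ J • (⊤ : Submodule R T) := by
    intro t a ha
    refine Submodule.smul_induction_on ha (fun r hr n _ => ?_) (fun y z hy hz => ?_)
    · rw [mul_smul_comm]
      exact Submodule.smul_mem_smul hr Submodule.mem_top
    · rw [mul_add]; exact Submodule.add_mem _ hy hz
  have hNTle : ∀ a ∈ NT, a ∈ J • (⊤ : Submodule R T) := by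
    intro a ha
    refine Submodule.span_induction ?_ ?_ ?_ ?_ ha
    · rintro y ⟨j, hj, rfl⟩
      have h1 : (j : T) = j • (1 : T) := by rw [Algebra.smul_def, mul_one]; rfl
      rw [h1]
      exact Submodule.smul_mem_smul hj Submodule.mem_top
    · exact Submodule.zero_mem _
    · intro y z _ _ hy hz; exact Submodule.add_mem _ hy hz
    · intro t y _ hy; exact hTmul t y hy
  have hS : stmt12AddIdeal R NT = ⊤ := by
    refine hmin.2 _ (lt_of_le_of_ne (stmt12_le_addIdeal R NT) ?_)
    intro h
    apply hJ
    rw [eq_bot_iff]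
    intro j hj
    have hjT : ∀ s : T, (j : T) * s ∈ R := by
      intro s
      have hmem : (j : T) * s ∈ stmt12AddIdeal R NT :=
        stmt12_mem_addIdeal.mpr ⟨0, R.zero_mem, _,
          NT.mul_mem_right s (Ideal.subset_span ⟨j, hj, rfl⟩), by ring⟩
      rwa [← h] at hmem
    exact (Submodule.mem_bot _).mpr (ZeroMemClass.coe_eq_zero.mp (hcond _ hjT))
  have hsup : (⊤ : Submodule R T) ≤ (1 : Submodule R T) ⊔ (J • ⊤) := by
    intro t _
    have ht : t ∈ stmt12AddIdeal R NT := hS ▸ Subring.mem_top t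
    obtain ⟨r, hr, n, hn, rfl⟩ := ht
    refine Submodule.add_mem _ (Submodule.mem_sup_left ?_) (Submodule.mem_sup_right (hNTle n hn))
    rw [Submodule.one_eq_range]
    exact ⟨⟨r, hr⟩, rfl⟩
  have hadj : (Algebra.adjoin R {x}).toSubring = ⊤ := by
    have hle : R ≤ (Algebra.adjoin R {x}).toSubring := by
      intro r hr
      exact (Algebra.adjoin R {x}).algebraMap_mem ⟨r, hr⟩
    have hxmem : x ∈ (Algebra.adjoin R {x}).toSubring := by
      simpa using Algebra.subset_adjoin (Set.mem_singleton x)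
    exact hmin.2 _ (lt_of_le_of_ne hle (fun h => hxR (h ▸ hxmem)))
  have hadj' : Algebra.adjoin R {x} = ⊤ := by
    apply Subalgebra.toSubring_injective
    rw [hadj]; rfl
  have hFG : (⊤ : Submodule R T).FG := by
    have := hx.fg_adjoin_singleton
    rwa [hadj', Algebra.top_toSubmodule] at this
  have hle1 := Submodule.le_of_le_smul_of_le_jacobson_bot hFG stmt12_jac hsup
  apply hxR
  have hx1 : x ∈ (1 : Submodule R T) := hle1 Submodule.mem_top
  rw [Submodule.one_eq_range] at hx1
  obtain ⟨⟨r, hr⟩, rfl⟩ := hx1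
  exact hr
end Aux2

section Aux3
variable {T : Type*} [CommRing T] [IsDomain T] {R : Subring T}

lemma stmt12_algebraMap (r : R) : algebraMap R T r = (r : T) := rfl

lemma stmt12_seesaw_integral (hmin : IsCoatom R) {u v : T} (huv : u * v = 1) (hvR : v ∉ R) :
    IsIntegral R u := by
  obtain ⟨p, hp⟩ := stmt12_adjoin hmin hvR u
  set n := p.natDegree with hn
  have hvu : v * u = 1 := by rw [mul_comm]; exact huv
  have hpow : u ^ (n + 1) = ∑ i ∈ Finset.range (n + 1), (p.coeff i : T) * u ^ (n - i) := by
    have h0 : u ^ (n + 1) = (Polynomial.aeval v) p * u ^ n := by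
      rw [hp, pow_succ, mul_comm]
    rw [h0, Polynomial.aeval_eq_sum_range, Finset.sum_mul]
    refine Finset.sum_congr rfl (fun i hi => ?_)
    have hin : i ≤ n := Nat.lt_succ_iff.mp (Finset.mem_range.mp hi)
    have h1 : u ^ i * u ^ (n - i) = u ^ n := by rw [← pow_add, Nat.add_sub_cancel' hin]
    have h2 : v ^ i * u ^ n = u ^ (n - i) := by
      rw [← h1, ← mul_assoc, ← mul_pow, hvu, one_pow, one_mul]
    rw [smul_mul_assoc, h2, Algebra.smul_def]
    rfl
  refine ⟨Polynomial.X ^ (n + 1) - ∑ i ∈ Finset.range (n + 1),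
      Polynomial.C (p.coeff i) * Polynomial.X ^ (n - i), ?_, ?_⟩
  · have hdeg : (∑ i ∈ Finset.range (n + 1),
        Polynomial.C (p.coeff i) * Polynomial.X ^ (n - i)).degree ≤ (n : WithBot ℕ) := by
      refine (Polynomial.degree_sum_le _ _).trans (Finset.sup_le fun i _ => ?_)
      exact (Polynomial.degree_C_mul_X_pow_le _ _).trans (by exact_mod_cast Nat.sub_le n i)
    exact Polynomial.monic_X_pow_sub (hdeg.trans_lt (by exact_mod_cast Nat.lt_succ_self n))
  · rw [show (Polynomial.eval₂ (algebraMap R T) u) = (Polynomial.aeval u : Polynomial R →ₐ[R] T) from rfl]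
    rw [map_sub, map_pow, Polynomial.aeval_X, map_sum]
    have hterm : ∀ i ∈ Finset.range (n + 1), (Polynomial.aeval u) (Polynomial.C (p.coeff i) *
        Polynomial.X ^ (n - i)) = (p.coeff i : T) * u ^ (n - i) := by
      intro i _; simp [stmt12_algebraMap]
    rw [Finset.sum_congr rfl hterm, sub_eq_zero]
    exact hpow
end Aux3

section Aux4
variable {T : Type*} [CommRing T] [IsDomain T] {R : Subring T}

lemma stmt12_main (hmin : IsCoatom R) [IsLocalRing R]
    (hcond : ∀ t : T, (∀ s : T, t * s ∈ R) → t = 0)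
    (hJ : IsLocalRing.maximalIdeal R ≠ ⊥) :
    ∀ t : T, t ∉ R → ∃ j : R, j ∈ IsLocalRing.maximalIdeal R ∧ t * (j : T) = 1 := by
  have hinv_mem : ∀ (t w : T), t ∉ R → t * w = 1 →
      ∃ j : R, j ∈ IsLocalRing.maximalIdeal R ∧ t * (j : T) = 1 := by
    intro t w htR htw
    have hwR : w ∈ R := by
      by_contra hwR
      exact htR (stmt12_int hmin hcond hJ (stmt12_seesaw_integral hmin htw hwR))
    refine ⟨⟨w, hwR⟩, ?_, htw⟩
    rw [IsLocalRing.mem_maximalIdeal]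
    intro hu
    obtain ⟨k, hk⟩ := hu.exists_right_inv
    apply htR
    have h1 : (w : T) * (k : T) = 1 := by
      have h1' := congrArg Subtype.val hk
      push_cast at h1'
      exact h1'
    have h2 : t = (k : T) := by
      calc t = t * ((w : T) * (k : T)) := by rw [h1, mul_one]
        _ = (t * w) * (k : T) := by ring
        _ = (k : T) := by rw [htw, one_mul]
    rw [h2]; exact k.2
  by_cases hfield : ∀ z : T, z ≠ 0 → ∃ w, z * w = 1
  · intro t htR
    have htz : t ≠ 0 := fun h => htR (h ▸ R.zero_mem)
    obtain ⟨w, hw⟩ := hfield t htz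
    exact hinv_mem t w htR hw
  · exfalso
    push_neg at hfield
    obtain ⟨z, hz0, hznu⟩ := hfield
    have hmaxJ : ∀ N : Ideal T, N.IsMaximal → ∀ j : R,
        j ∈ IsLocalRing.maximalIdeal R → (j : T) ∈ N := by
      intro N hN j hj
      have hNR : ∃ n ∈ N, n ∉ R := by
        by_contra h
        push_neg at h
        have hbot : N = ⊥ := by
          rw [eq_bot_iff]; intro n hn
          have hns : ∀ s : T, n * s ∈ R := fun s => h _ (N.mul_mem_right s hn)
          simpa using hcond n hns
        obtain ⟨y, i, hiN, hyi⟩ := hN.exists_inv (show z ∉ N by rw [hbot]; simpa using hz0)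
        rw [hbot] at hiN
        simp only [Ideal.mem_bot] at hiN
        rw [hiN, add_zero] at hyi
        exact hznu y (by rw [mul_comm]; exact hyi)
      obtain ⟨n0, hn0N, hn0R⟩ := hNR
      have hS : stmt12AddIdeal R N = ⊤ := by
        refine hmin.2 _ (lt_of_le_of_ne (stmt12_le_addIdeal R N) ?_)
        intro h
        have : n0 ∈ stmt12AddIdeal R N := stmt12_mem_addIdeal.mpr ⟨0, R.zero_mem, n0, hn0N, by ring⟩
        rw [← h] at this
        exact hn0R this
      set φ : R →+* T ⧸ N := (Ideal.Quotient.mk N).comp R.subtype with hφ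
      have hsurj : Function.Surjective φ := by
        intro y
        obtain ⟨t, rfl⟩ := Ideal.Quotient.mk_surjective y
        have ht : t ∈ stmt12AddIdeal R N := by rw [hS]; trivial
        obtain ⟨r, hr, m, hm, rfl⟩ := ht
        refine ⟨⟨r, hr⟩, ?_⟩
        show Ideal.Quotient.mk N r = Ideal.Quotient.mk N (r + m)
        rw [Ideal.Quotient.mk_eq_mk_iff_sub_mem]
        simpa using N.neg_mem hm
      haveI : N.IsMaximal := hN
      have hfieldQ : IsField (T ⧸ N) := (Ideal.Quotient.maximal_ideal_iff_isField_quotient N).mp hN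
      have hfieldR : IsField (R ⧸ RingHom.ker φ) :=
        MulEquiv.isField hfieldQ (RingHom.quotientKerEquivOfSurjective hsurj).toMulEquiv
      have hkmax : (RingHom.ker φ).IsMaximal := Ideal.Quotient.maximal_of_isField _ hfieldR
      have hker : RingHom.ker φ = IsLocalRing.maximalIdeal R := IsLocalRing.eq_maximalIdeal hkmax
      have hj0 : j ∈ RingHom.ker φ := by rw [hker]; exact hj
      have hj1 : φ j = 0 := by rwa [RingHom.mem_ker] at hj0
      rwa [show φ j = Ideal.Quotient.mk N (j : T) from rfl,
        Ideal.Quotient.eq_zero_iff_mem] at hj1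
    obtain ⟨j0, hj0J, hj0ne⟩ := (Submodule.ne_bot_iff _).mp hJ
    have hj0T : (j0 : T) ≠ 0 := fun h => hj0ne (ZeroMemClass.coe_eq_zero.mp h)
    have hnall : ¬ ∀ s, (j0 : T) * s ∈ R := fun h => hj0T (hcond _ h)
    push_neg at hnall
    obtain ⟨s, hs⟩ := hnall
    set u := 1 + (j0 : T) * s with hu
    have huR : u ∉ R := by
      intro h
      apply hs
      have hueq : (j0 : T) * s = u - 1 := by rw [hu]; ring
      rw [hueq]; exact R.sub_mem h R.one_mem
    have hunit : ∃ w, u * w = 1 := by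
      by_contra h
      push_neg at h
      have hnu : ¬ IsUnit u := by
        intro hu'
        obtain ⟨v, hv⟩ := hu'.exists_right_inv
        exact h v hv
      obtain ⟨N, hNmax, hNle⟩ :=
        Ideal.exists_le_maximal _ (Ideal.span_singleton_eq_top.not.mpr hnu)
      have huN : u ∈ N := hNle (Ideal.subset_span rfl)
      have hjN : (j0 : T) ∈ N := hmaxJ N hNmax j0 hj0J
      have h1 : (1 : T) ∈ N := by
        have he : (1 : T) = u - (j0 : T) * s := by rw [hu]; ring
        rw [he]; exact N.sub_mem huN (N.mul_mem_right s hjN)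
      exact hNmax.ne_top ((Ideal.eq_top_iff_one _).mpr h1)
    obtain ⟨w, hw⟩ := hunit
    obtain ⟨jw, hjwJ, hjw⟩ := hinv_mem u w huR hw
    obtain ⟨N0, hN0⟩ := Ideal.exists_maximal T
    have h1 : (1 : T) ∈ N0 := by
      rw [← hjw]; exact N0.mul_mem_left u (hmaxJ N0 hN0 jw hjwJ)
    exact hN0.ne_top ((Ideal.eq_top_iff_one _).mpr h1)
end Aux4

section Final
variable {T : Type*} [CommRing T] [IsDomain T] {R : Subring T}

/-- Every nonzero prime is the maximal ideal. -/
lemma stmt12_prime (hmin : IsCoatom R) [IsLocalRing R]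
    (hunit : ∀ z : T, z ≠ 0 → ∃ w : T, z * w = 1)
    {P : Ideal R} (hP : P.IsPrime) (hPbot : P ≠ ⊥) : P = IsLocalRing.maximalIdeal R := by
  by_contra hPJ
  have hone : (1 : R) ∉ P := fun h1 => hP.ne_top ((Ideal.eq_top_iff_one _).mpr h1)
  set W : Subring T :=
    { carrier := {t : T | ∃ a : R, a ∉ P ∧ ∃ r : R, (a : T) * t = r}
      one_mem' := ⟨1, hone, 1, by simp⟩
      zero_mem' := ⟨1, hone, 0, by simp⟩
      add_mem' := by
        rintro x y ⟨a, haP, r, har⟩ ⟨a', haP', r', har'⟩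
        refine ⟨a * a', fun h => (hP.mem_or_mem h).elim haP haP', a' * r + a * r', ?_⟩
        push_cast
        calc (a : T) * a' * (x + y) = (a' : T) * ((a : T) * x) + (a : T) * ((a' : T) * y) := by ring
          _ = (a' : T) * r + (a : T) * r' := by rw [har, har']
      neg_mem' := by
        rintro x ⟨a, haP, r, har⟩
        exact ⟨a, haP, -r, by push_cast; rw [mul_neg, har]⟩
      mul_mem' := by
        rintro x y ⟨a, haP, r, har⟩ ⟨a', haP', r', har'⟩
        refine ⟨a * a', fun h => (hP.mem_or_mem h).elim haP haP', r * r', ?_⟩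
        push_cast
        calc (a : T) * a' * (x * y) = ((a : T) * x) * ((a' : T) * y) := by ring
          _ = (r : T) * r' := by rw [har, har'] } with hW
  have hRW : R ≤ W := fun r hr => ⟨1, hone, ⟨r, hr⟩, by simp⟩
  have hPle : P ≤ IsLocalRing.maximalIdeal R :=
    IsLocalRing.le_maximalIdeal hP.ne_top
  obtain ⟨s, hsJ, hsP⟩ := SetLike.exists_of_lt (lt_of_le_of_ne hPle hPJ)
  have hsne : (s : T) ≠ 0 := by
    intro h
    exact hsP (by rw [ZeroMemClass.coe_eq_zero.mp h]; exact P.zero_mem)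
  obtain ⟨w, hw⟩ := hunit _ hsne
  have hwR : w ∉ R := by
    intro hwR'
    have : IsUnit s := by
      refine IsUnit.of_mul_eq_one (a := s) ⟨w, hwR'⟩ ?_
      apply Subtype.ext
      push_cast
      exact hw
    exact (IsLocalRing.mem_maximalIdeal s).mp hsJ this
  have hwW : w ∈ W := ⟨s, hsP, 1, by rw [hw]; simp⟩
  have hWtop : W = ⊤ := hmin.2 _ (lt_of_le_of_ne hRW (fun h => hwR (by rw [h]; exact hwW)))
  obtain ⟨p, hpP, hpne⟩ := (Submodule.ne_bot_iff _).mp hPbot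
  have hpT : (p : T) ≠ 0 := fun h => hpne (ZeroMemClass.coe_eq_zero.mp h)
  obtain ⟨wp, hwp⟩ := hunit _ hpT
  have : wp ∈ W := by rw [hWtop]; trivial
  obtain ⟨a, haP, r, har⟩ := this
  apply haP
  have : a = r * p := by
    apply Subtype.ext
    push_cast
    calc (a : T) = (a : T) * ((p : T) * wp) := by rw [hwp, mul_one]
      _ = ((a : T) * wp) * p := by ring
      _ = (r : T) * p := by rw [har]
  rw [this]
  exact P.mul_mem_left r hpP
end Final

/-- Let `R ⊂ T` be a minimal ring extension with `T` a domain and `R` local with maximal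
ideal `J`. If the conductor `(R : T)` is zero and `J ≠ 0`, then `R` is a one-dimensional
valuation domain and `T` is its field of fractions. -/
theorem stmt_12 (T : Type*) [CommRing T] [IsDomain T] (R : Subring T)
    (hmin : IsCoatom R) [IsLocalRing R]
    (hcond : ∀ t : T, (∀ s : T, t * s ∈ R) → t = 0)
    (hJ : IsLocalRing.maximalIdeal R ≠ ⊥) :
    ValuationRing R ∧ ringKrullDim R = 1 ∧ IsFractionRing R T := by
  have ML := stmt12_main hmin hcond hJ
  have hunit : ∀ z : T, z ≠ 0 → ∃ w : T, z * w = 1 := by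
    intro z hz
    by_cases hzR : z ∈ R
    · have hna : ¬ ∀ s, z * s ∈ R := fun h => hz (hcond z h)
      push_neg at hna
      obtain ⟨s, hs⟩ := hna
      obtain ⟨j, _, hj⟩ := ML _ hs
      exact ⟨s * j, by rw [← mul_assoc]; exact hj⟩
    · obtain ⟨j, _, hj⟩ := ML z hzR
      exact ⟨j, hj⟩
  have hval : ValuationRing R := by
    refine { cond' := fun a b => ?_ }
    by_cases hb : b = 0
    · exact ⟨0, Or.inl (by rw [hb, mul_zero])⟩
    by_cases ha : a = 0
    · exact ⟨0, Or.inr (by rw [ha, mul_zero])⟩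
    have hbT : (b : T) ≠ 0 := fun h => hb (ZeroMemClass.coe_eq_zero.mp h)
    obtain ⟨s, hs⟩ := hunit _ hbT
    by_cases htR : (a : T) * s ∈ R
    · refine ⟨⟨(a : T) * s, htR⟩, Or.inr ?_⟩
      apply Subtype.ext
      push_cast
      calc (b : T) * ((a : T) * s) = (a : T) * ((b : T) * s) := by ring
        _ = (a : T) := by rw [hs, mul_one]
    · obtain ⟨j, _, hj⟩ := ML _ htR
      refine ⟨j, Or.inl ?_⟩
      apply Subtype.ext
      push_cast
      calc (a : T) * (j : T) = ((a : T) * j) * ((b : T) * s) := by rw [hs, mul_one]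
        _ = (b : T) * ((a : T) * s * j) := by ring
        _ = (b : T) := by rw [hj, mul_one]
  refine ⟨hval, ?_, ?_⟩
  -- Krull dimension 1
  · have hdomR : IsDomain R := inferInstance
    set x0 : PrimeSpectrum R := ⟨⊥, Ideal.bot_prime⟩ with hx0
    set x1 : PrimeSpectrum R :=
      ⟨IsLocalRing.maximalIdeal R, (IsLocalRing.maximalIdeal.isMaximal R).isPrime⟩ with hx1
    have hlt : x0 < x1 := by
      refine lt_of_le_of_ne bot_le (fun h => hJ ?_)
      have := congrArg PrimeSpectrum.asIdeal h
      exact this.symm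
    set c : LTSeries (PrimeSpectrum R) := ⟨1, ![x0, x1], by
      intro i
      fin_cases i
      simpa using hlt⟩ with hc
    have hge : (1 : WithBot ℕ∞) ≤ ringKrullDim R := by
      have := Order.LTSeries.length_le_krullDim c
      exact_mod_cast this
    have hle : ringKrullDim R ≤ 1 := by
      show Order.krullDim (PrimeSpectrum R) ≤ 1
      rw [Order.krullDim]
      refine iSup_le fun p => ?_
      have hplen : p.length ≤ 1 := by
        by_contra hlen
        push_neg at hlen
        have h0 : p.toFun ⟨0, by omega⟩ < p.toFun ⟨1, by omega⟩ :=
          p.strictMono (Fin.mk_lt_mk.mpr (by omega))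
        have h1 : p.toFun ⟨1, by omega⟩ < p.toFun ⟨2, by omega⟩ :=
          p.strictMono (Fin.mk_lt_mk.mpr (by omega))
        have key : ∀ x : PrimeSpectrum R, x.asIdeal = ⊥ ∨
            x.asIdeal = IsLocalRing.maximalIdeal R := by
          intro x
          by_cases hx : x.asIdeal = ⊥
          · exact Or.inl hx
          · exact Or.inr (stmt12_prime hmin hunit x.isPrime hx)
        rcases key (p.toFun ⟨1, by omega⟩) with h | h
        · have : (p.toFun ⟨0, by omega⟩).asIdeal < (p.toFun ⟨1, by omega⟩).asIdeal := h0
          rw [h] at this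
          exact not_lt_bot this
        · have hlt2 : (p.toFun ⟨1, by omega⟩).asIdeal < (p.toFun ⟨2, by omega⟩).asIdeal := h1
          have hle2 : (p.toFun ⟨2, by omega⟩).asIdeal ≤ IsLocalRing.maximalIdeal R :=
            IsLocalRing.le_maximalIdeal (p.toFun ⟨2, by omega⟩).isPrime.ne_top
          rw [h] at hlt2
          exact absurd (lt_of_lt_of_le hlt2 hle2) (lt_irrefl _)
      exact_mod_cast hplen
    exact le_antisymm hle hge
  -- fraction ring
  · refine ⟨fun y => ?_, fun z => ?_, fun {x y} h => ?_⟩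
    · have hy : (y : R) ≠ 0 := nonZeroDivisors.ne_zero y.2
      have hyT : ((y : R) : T) ≠ 0 := fun h => hy (ZeroMemClass.coe_eq_zero.mp h)
      obtain ⟨w, hw⟩ := hunit _ hyT
      exact IsUnit.of_mul_eq_one w hw
    · by_cases hzR : z ∈ R
      · exact ⟨⟨⟨z, hzR⟩, 1⟩, by simp [stmt12_algebraMap]⟩
      · obtain ⟨j, _, hj⟩ := ML z hzR
        have hjne : j ≠ 0 := by
          intro h
          rw [h] at hj
          simp at hj
        exact ⟨⟨1, ⟨j, mem_nonZeroDivisors_of_ne_zero hjne⟩⟩, by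
          simpa [stmt12_algebraMap] using hj⟩
    · refine ⟨1, ?_⟩
      have : x = y := Subtype.ext h
      rw [this]
end

section
/- Let R be a local integral domain that is a maximal proper subring of its quotient field K (i.e., R ⊂ K is a minimal ring extension). Then R is a valuation ring of Krull dimension one. -/
/-!
Since `R ≠ K`, `R` is not a field, so its maximal ideal is nonzero and the only strictly larger
subring `K` does not dominate `R`: thus `R` is maximal among local subrings of `K` under
domination, i.e. a valuation ring. For a valuation ring `A`, the primes `P` correspond
order-reversingly to the overrings `A_P`; as the only overrings are `A` and `K`, the only primes
are `0` and the maximal ideal.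
-/

open IsLocalRing

theorem ringKrullDim_eq_one_of_not_isField {R : Type*} [CommRing R] [IsDomain R]
    [Ring.KrullDimLE 1 R] (h : ¬ IsField R) : ringKrullDim R = 1 := by
  refine eq_of_le_of_not_lt (by exact_mod_cast Ring.krullDimLE_iff.mp ‹_›) fun hlt ↦ h ?_
  have : Ring.KrullDimLE 0 R := Ring.krullDimLE_iff.mpr (Order.le_of_lt_succ hlt)
  exact Ring.KrullDimLE.isField_of_isDomain

section

variable {K : Type*} [Field K]

theorem Subring.not_isField_of_ne_top {R : Subring K} [IsFractionRing R K] (hR : R ≠ ⊤) :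
    ¬ IsField R := by
  rw [← IsFractionRing.surjective_iff_isField (K := K)]
  refine fun hsurj ↦ hR (eq_top_iff.mpr fun x _ ↦ ?_)
  obtain ⟨r, rfl⟩ := hsurj x
  exact r.2

theorem LocalSubring.isMax_of_isCoatom {R : LocalSubring K} (hR : IsCoatom R.toSubring)
    (hm : maximalIdeal R.toSubring ≠ ⊥) : IsMax R := by
  rintro B ⟨hle, hloc⟩
  obtain heq | hlt := hle.eq_or_lt
  · exact (LocalSubring.toSubring_injective heq).ge
  obtain ⟨a, ha, ha0⟩ := Submodule.exists_mem_ne_zero_of_ne_bot hm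
  have hunit : IsUnit (Subring.inclusion hle a) :=
    .of_mul_eq_one ⟨(a : K)⁻¹, hR.2 _ hlt ▸ trivial⟩
      (Subtype.ext (mul_inv_cancel₀ (Subtype.coe_ne_coe.mpr ha0)))
  exact absurd (hloc.1 _ hunit) ((mem_maximalIdeal a).mp ha)

theorem ValuationSubring.krullDimLE_one_of_isCoatom_toSubring {A : ValuationSubring K}
    (hA : IsCoatom A.toSubring) : Ring.KrullDimLE 1 A := by
  refine .mk₁' fun P hP0 hP ↦ ?_
  rw [← A.idealOfLE_ofPrime P] at hP0 ⊢
  generalize A.le_ofPrime P = hle at hP0 ⊢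
  generalize A.ofPrime P = S at hle hP0 ⊢
  obtain rfl | hlt := hle.eq_or_lt
  · exact maximalIdeal.isMaximal A
  · obtain rfl : S = ⊤ := ValuationSubring.toSubring_injective (hA.2 S.toSubring hlt)
    exact absurd A.idealOfLE_top hP0

end

/-- A local domain that is a maximal proper subring of its quotient field is a
valuation ring of Krull dimension one. -/
theorem stmt_13 (K : Type*) [Field K] (R : Subring K) [IsLocalRing R]
    [IsFractionRing R K] (hmin : IsCoatom R) :
    ValuationRing R ∧ ringKrullDim R = 1 := by
  have hnf : ¬ IsField R := Subring.not_isField_of_ne_top hmin.1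
  obtain ⟨V, hV⟩ := LocalSubring.exists_valuationRing_of_isMax
    (LocalSubring.isMax_of_isCoatom (R := ⟨R⟩) hmin (isField_iff_maximalIdeal_eq.not.mp hnf))
  obtain rfl : V.toSubring = R := congr_arg LocalSubring.toSubring hV
  have : Ring.KrullDimLE 1 V := V.krullDimLE_one_of_isCoatom_toSubring hmin
  exact ⟨inferInstanceAs (ValuationRing V), ringKrullDim_eq_one_of_not_isField hnf⟩
end

section
/- Let R be a field. Then R ⊂ T is a minimal ring extension with T an integral domain if and only if T is a minimal field extension of R (i.e., T is a field containing R with no intermediate field, equivalently no intermediate ring). -/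
/-- Let `R` be a field (as a subring of a domain `T`). Then `R ⊂ T` is a minimal ring
extension iff `T` is a minimal field extension of `R`, i.e. `T` is a field and there is
no intermediate subring. -/
theorem stmt_14 (T : Type*) [CommRing T] [IsDomain T] (R : Subring T)
    (hR : IsField R) :
    IsCoatom R ↔ (IsField T ∧ IsCoatom R) := by
  constructor
  · intro hc
    refine ⟨?_, hc⟩
    letI : Field R := hR.toField
    have hinj : Function.Injective (algebraMap R T) := Subtype.coe_injective
    -- consider the integral closure of R in T
    set C : Subring T := (integralClosure R T).toSubring with hC
    have hRC : R ≤ C := by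
      intro r hr
      exact isIntegral_algebraMap (x := (⟨r, hr⟩ : R))
    rcases lt_or_eq_of_le hRC with hlt | heq
    · have htop : C = ⊤ := hc.2 _ hlt
      have : Algebra.IsIntegral R T := ⟨fun x => by
        have : x ∈ C := htop ▸ Subring.mem_top x
        exact this⟩
      exact (Algebra.IsIntegral.isField_iff_isField hinj).mp hR
    · -- integral closure equals R: derive a contradiction
      exfalso
      obtain ⟨t, ht⟩ : ∃ t : T, t ∉ R := by
        by_contra h
        push_neg at h
        exact hc.1 ((Subring.eq_top_iff' R).mpr h)
      have htrans : ¬ IsIntegral R t := fun h => ht (heq ▸ h)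
      -- t^2 ∉ R
      have ht2 : (t ^ 2) ∉ R := by
        intro h2
        apply htrans
        refine ⟨Polynomial.X ^ 2 - Polynomial.C (⟨t ^ 2, h2⟩ : R),
          Polynomial.monic_X_pow_sub_C _ two_ne_zero, ?_⟩
        simp [Polynomial.eval₂_sub, sub_eq_zero]
        rfl
      set S : Subring T := (Algebra.adjoin R {t ^ 2}).toSubring with hS
      have hRS : R < S := by
        refine lt_of_le_of_ne ?_ ?_
        · intro r hr
          exact Subalgebra.algebraMap_mem _ (⟨r, hr⟩ : R)
        · intro hEq
          exact ht2 (hEq ▸ Algebra.subset_adjoin (Set.mem_singleton _))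
      have hStop : S = ⊤ := hc.2 _ hRS
      -- so t ∈ adjoin R {t^2}, hence t is algebraic: contradiction
      have htS : t ∈ Algebra.adjoin R ({t ^ 2} : Set T) := by
        have : t ∈ S := hStop ▸ Subring.mem_top t
        exact this
      rw [Algebra.adjoin_singleton_eq_range_aeval] at htS
      obtain ⟨p, hp⟩ := htS
      apply htrans
      rw [← isAlgebraic_iff_isIntegral]
      refine ⟨Polynomial.expand R 2 p - Polynomial.X, ?_, ?_⟩
      · intro h0
        have h1 : ((Polynomial.expand R 2 p - Polynomial.X).coeff 1) = 0 := by
          rw [h0]; simp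
        rw [Polynomial.coeff_sub, Polynomial.coeff_expand (by norm_num),
          Polynomial.coeff_X_one] at h1
        norm_num at h1
      · rw [map_sub, Polynomial.expand_aeval, sub_eq_zero, Polynomial.aeval_X]
        exact hp
  · exact fun h => h.2
end

section
/- There exists a field extension ℚ ⊂ K of degree 4 (hence not of prime degree) such that there is no intermediate ring strictly between ℚ and K; for example K = ℚ(α) where α is a root of an irreducible quartic over ℚ whose Galois group of the splitting field is S₄. -/
/-! The example is `K = ℚ[X]/(X⁴ - X - 1)`. Every ring between `ℚ` and `K` is a field, so a proper
one would be a quadratic field `F` over which `K` has degree `2`, and `X⁴ - X - 1` would become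
reducible over `F`. It has no root in `F`, being irreducible over `ℚ` of degree `4 ∤ 2`, so it would
split as `(X² + pX + q)(X² - pX + s)`; comparing coefficients shows that `p² ∈ F` is a root of the
resolvent cubic `Y³ + 4Y - 1`. That cubic has no rational root, hence is irreducible over `ℚ` of
degree `3 ∤ 2`: a contradiction. The same factorization argument over `ℚ` shows that `X⁴ - X - 1` is
irreducible. -/

open Polynomial Module

theorem Polynomial.Irreducible.natDegree_dvd_finrank_of_aeval_eq_zero {K L : Type*} [Field K]
    [Field L] [Algebra K L] [FiniteDimensional K L] {f : K[X]} (hf : Irreducible f) {x : L}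
    (hx : aeval x f = 0) : f.natDegree ∣ finrank K L := by
  rw [minpoly.Irreducible.eq_minpoly hf hx, natDegree_C_mul (leadingCoeff_ne_zero.mpr hf.ne_zero)]
  exact minpoly.degree_dvd (.of_finite K x)

theorem IntermediateField.eq_bot_or_eq_top_of_finrank_eq_four {k K : Type*} [Field k] [Field K]
    [Algebra k K] (hK : finrank k K = 4) (F : IntermediateField k K) (hF : finrank k F ≠ 2) :
    F = ⊥ ∨ F = ⊤ := by
  have : FiniteDimensional k K := Module.finite_of_finrank_eq_succ hK
  have hmul : finrank k F * finrank F K = 4 := hK ▸ finrank_mul_finrank k F K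
  have hpos : 0 < finrank k F := finrank_pos
  have hle : finrank k F ≤ 4 := Nat.le_of_dvd (by norm_num) (Dvd.intro _ hmul)
  rw [← finrank_eq_one_iff, ← finrank_eq_one_iff_eq_top]
  interval_cases h : finrank k F <;> omega

theorem Subring.exists_intermediateField_eq {k K : Type*} [Field k] [Field K] [Algebra k K]
    [Algebra.IsAlgebraic k K] (S : Subring K) (hS : (algebraMap k K).range ≤ S) :
    ∃ F : IntermediateField k K, F.toSubalgebra.toSubring = S :=
  let A : Subalgebra k K := { S with algebraMap_mem' := fun r ↦ hS ⟨r, rfl⟩ }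
  ⟨A.toIntermediateField' (Subalgebra.isField_of_algebraic A), rfl⟩

namespace Polynomial

variable {R : Type*} [CommRing R]

theorem Monic.eq_X_sq_add_C_mul_X_add_C {g : R[X]} (hg : g.Monic) (h2 : g.natDegree = 2) :
    g = X ^ 2 + C (g.coeff 1) * X + C (g.coeff 0) := by
  conv_lhs => rw [hg.as_sum, h2]
  simp only [Finset.sum_range_succ, Finset.sum_range_zero, pow_zero, pow_one, mul_one]
  ring

theorem resolvent_eq_zero_of_mul_eq_X_pow_four_sub_X_sub_one {p q r s : R}
    (h : (X ^ 2 + C p * X + C q) * (X ^ 2 + C r * X + C s) = X ^ 4 - X - 1) :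
    (p ^ 2) ^ 3 + 4 * p ^ 2 - 1 = 0 := by
  have hexp : X ^ 4 + C (p + r) * X ^ 3 + C (q + s + p * r) * X ^ 2 + C (p * s + q * r) * X
      + C (q * s) = X ^ 4 - X - 1 := by
    simp only [← h, C_add, C_mul]
    ring
  have hcoeff (n : ℕ) := congrArg (coeff · n) hexp
  have e3 := hcoeff 3
  have e2 := hcoeff 2
  have e1 := hcoeff 1
  have e0 := hcoeff 0
  simp only [coeff_add, coeff_sub, coeff_C_mul, coeff_X_pow, coeff_X, coeff_C, coeff_one]
    at e3 e2 e1 e0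
  norm_num at e3 e2 e1 e0
  obtain rfl : r = -p := by linear_combination e3
  have hsum : q + s = p ^ 2 := by linear_combination e2
  have hdiff : p * (s - q) = -1 := by linear_combination e1
  linear_combination
    (-(p ^ 2) * (q + s + p ^ 2)) * hsum + (p * (s - q) - 1) * hdiff + 4 * p ^ 2 * e0

theorem natDegree_X_pow_four_sub_X_sub_one [Nontrivial R] :
    (X ^ 4 - X - 1 : R[X]).natDegree = 4 := by
  compute_degree!

theorem natDegree_X_pow_three_add_four_mul_X_sub_one [Nontrivial R] :
    (X ^ 3 + 4 * X - 1 : R[X]).natDegree = 3 := by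
  compute_degree!

theorem monic_X_pow_four_sub_X_sub_one : (X ^ 4 - X - 1 : R[X]).Monic := by
  monicity!

theorem irreducible_X_pow_four_sub_X_sub_one [IsDomain R] (hroot : ∀ x : R, x ^ 4 - x - 1 ≠ 0)
    (hres : ∀ y : R, y ^ 3 + 4 * y - 1 ≠ 0) : Irreducible (X ^ 4 - X - 1 : R[X]) := by
  have hmonic := monic_X_pow_four_sub_X_sub_one (R := R)
  have hne : (X ^ 4 - X - 1 : R[X]) ≠ 1 := ne_of_apply_ne natDegree <| by
    rw [natDegree_X_pow_four_sub_X_sub_one, natDegree_one]; decide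
  rw [hmonic.irreducible_iff_lt_natDegree_lt hne, natDegree_X_pow_four_sub_X_sub_one]
  intro g hg hdeg hdvd
  obtain hg1 | hg2 : g.natDegree = 1 ∨ g.natDegree = 2 := by
    simp only [Finset.mem_Ioc] at hdeg; omega
  · rw [hg.eq_X_add_C hg1, ← sub_neg_eq_add, ← C_neg, dvd_iff_isRoot] at hdvd
    exact hroot (-g.coeff 0) (by simpa [sub_eq_add_neg] using hdvd)
  · obtain ⟨f, hgf⟩ := hdvd
    have hf : f.Monic := hg.of_mul_monic_left (hgf ▸ hmonic)
    have hf2 : f.natDegree = 2 := by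
      have := congrArg natDegree hgf
      rw [natDegree_X_pow_four_sub_X_sub_one, hg.natDegree_mul hf, hg2] at this
      omega
    rw [hg.eq_X_sq_add_C_mul_X_add_C hg2, hf.eq_X_sq_add_C_mul_X_add_C hf2] at hgf
    exact hres _ (resolvent_eq_zero_of_mul_eq_X_pow_four_sub_X_sub_one hgf.symm)

end Polynomial

theorem Rat.pow_four_sub_sub_one_ne_zero (x : ℚ) : x ^ 4 - x - 1 ≠ 0 := by
  intro hx
  obtain ⟨n, rfl⟩ : ∃ n : ℤ, (n : ℚ) = x := IsIntegrallyClosed.isIntegral_iff.mp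
    ⟨X ^ 4 - X - 1, monic_X_pow_four_sub_X_sub_one, by simpa using hx⟩
  have hn : n * (n ^ 3 - 1) = 1 := by
    exact_mod_cast (by linear_combination hx : (n : ℚ) * (n ^ 3 - 1) = 1)
  rcases Int.eq_one_or_neg_one_of_mul_eq_one hn with rfl | rfl <;> norm_num at hn

theorem Rat.pow_three_add_four_mul_sub_one_ne_zero (y : ℚ) : y ^ 3 + 4 * y - 1 ≠ 0 := by
  intro hy
  obtain ⟨n, rfl⟩ : ∃ n : ℤ, (n : ℚ) = y := IsIntegrallyClosed.isIntegral_iff.mp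
    ⟨X ^ 3 + 4 * X - 1, by monicity!, by simpa using hy⟩
  have hn : n * (n ^ 2 + 4) = 1 := by
    exact_mod_cast (by linear_combination hy : (n : ℚ) * (n ^ 2 + 4) = 1)
  rcases Int.eq_one_or_neg_one_of_mul_eq_one hn with rfl | rfl <;> norm_num at hn

theorem Rat.irreducible_X_pow_three_add_four_mul_X_sub_one :
    Irreducible (X ^ 3 + 4 * X - 1 : ℚ[X]) :=
  irreducible_of_degree_le_three_of_not_isRoot
    (by simp [natDegree_X_pow_three_add_four_mul_X_sub_one]) fun z hz ↦
      Rat.pow_three_add_four_mul_sub_one_ne_zero z (by simpa using hz)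

theorem Rat.irreducible_X_pow_four_sub_X_sub_one : Irreducible (X ^ 4 - X - 1 : ℚ[X]) :=
  Polynomial.irreducible_X_pow_four_sub_X_sub_one pow_four_sub_sub_one_ne_zero
    pow_three_add_four_mul_sub_one_ne_zero

instance : Fact (Irreducible (X ^ 4 - X - 1 : ℚ[X])) :=
  ⟨Rat.irreducible_X_pow_four_sub_X_sub_one⟩

abbrev QuarticField : Type := AdjoinRoot (X ^ 4 - X - 1 : ℚ[X])

theorem QuarticField.finrank_eq_four : finrank ℚ QuarticField = 4 :=
  (AdjoinRoot.powerBasis monic_X_pow_four_sub_X_sub_one.ne_zero).finrank.trans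
    natDegree_X_pow_four_sub_X_sub_one

instance : FiniteDimensional ℚ QuarticField :=
  Module.finite_of_finrank_eq_succ QuarticField.finrank_eq_four

theorem irreducible_X_pow_four_sub_X_sub_one_of_finrank_eq_two {F : Type*} [Field F]
    [Algebra ℚ F] (hF : finrank ℚ F = 2) : Irreducible (X ^ 4 - X - 1 : F[X]) := by
  have : FiniteDimensional ℚ F := Module.finite_of_finrank_eq_succ hF
  refine irreducible_X_pow_four_sub_X_sub_one (fun x hx ↦ ?_) (fun y hy ↦ ?_)
  · have := Rat.irreducible_X_pow_four_sub_X_sub_one.natDegree_dvd_finrank_of_aeval_eq_zero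
      (x := x) (by simpa using hx)
    rw [natDegree_X_pow_four_sub_X_sub_one, hF] at this
    norm_num at this
  · have :=
      Rat.irreducible_X_pow_three_add_four_mul_X_sub_one.natDegree_dvd_finrank_of_aeval_eq_zero
        (x := y) (by simpa [map_ofNat] using hy)
    rw [natDegree_X_pow_three_add_four_mul_X_sub_one, hF] at this
    norm_num at this

theorem QuarticField.finrank_intermediateField_ne_two (F : IntermediateField ℚ QuarticField) :
    finrank ℚ F ≠ 2 := by
  intro hF
  have hFK : finrank F QuarticField = 2 := by
    have := finrank_mul_finrank ℚ F QuarticField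
    rw [QuarticField.finrank_eq_four, hF] at this
    omega
  have hroot : aeval (AdjoinRoot.root (X ^ 4 - X - 1 : ℚ[X])) (X ^ 4 - X - 1 : F[X]) = 0 := by
    rw [← show (X ^ 4 - X - 1 : ℚ[X]).map (algebraMap ℚ F) = X ^ 4 - X - 1 by simp,
      aeval_map_algebraMap]
    exact (AdjoinRoot.aeval_eq _).trans AdjoinRoot.mk_self
  have hmin := minpoly.eq_of_irreducible_of_monic
    (irreducible_X_pow_four_sub_X_sub_one_of_finrank_eq_two hF) hroot
    monic_X_pow_four_sub_X_sub_one
  have := minpoly.natDegree_le (A := F) (AdjoinRoot.root (X ^ 4 - X - 1 : ℚ[X]))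
  rw [← hmin, natDegree_X_pow_four_sub_X_sub_one, hFK] at this
  norm_num at this

/-- There is a field extension `K` of `ℚ` of degree `4` (not a prime) with no
intermediate ring strictly between `ℚ` and `K`. -/
theorem stmt_15 :
    ∃ (K : Type) (_ : Field K) (_ : Algebra ℚ K),
      Module.finrank ℚ K = 4 ∧
        ∀ S : Subring K, (algebraMap ℚ K).range ≤ S →
          S = (algebraMap ℚ K).range ∨ S = ⊤ := by
  refine ⟨QuarticField, inferInstance, inferInstance, QuarticField.finrank_eq_four,
    fun S hS ↦ ?_⟩
  obtain ⟨F, rfl⟩ := S.exists_intermediateField_eq hS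
  rcases F.eq_bot_or_eq_top_of_finrank_eq_four QuarticField.finrank_eq_four
    (QuarticField.finrank_intermediateField_ne_two F) with rfl | rfl
  · exact Or.inl (SetLike.coe_injective rfl)
  · exact Or.inr Algebra.top_toSubring
end

section
/- Let R ⊂ T be a minimal ring extension of commutative rings. Then the conductor (R : T) = {t ∈ T : tT ⊆ R} is a prime ideal of R. -/
/-- The conductor of a ring extension `R ⊆ T`, as an ideal of `R`. -/
def conductorIdeal {T : Type*} [CommRing T] (R : Subring T) : Ideal R where
  carrier := {r : R | ∀ t : T, (r : T) * t ∈ R}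
  zero_mem' := by intro t; simpa using R.zero_mem
  add_mem' := by
    intro x y hx hy t
    simpa [add_mul] using R.add_mem (hx t) (hy t)
  smul_mem' := by
    intro c x hx t
    have := hx ((c : T) * t)
    have heq : ((c • x : R) : T) * t = (x : T) * ((c : T) * t) := by
      rw [smul_eq_mul]
      push_cast
      ring
    rw [heq]
    exact this

lemma mem_conductorIdeal {T : Type*} [CommRing T] {R : Subring T} {x : R} :
    x ∈ conductorIdeal R ↔ ∀ t : T, (x : T) * t ∈ R := Iff.rfl

/-- `R + aT` as a subring of `T`, for `a ∈ R`. -/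
def adjoinMul {T : Type*} [CommRing T] (R : Subring T) (a : R) : Subring T where
  carrier := {x | ∃ r ∈ R, ∃ t : T, x = r + (a : T) * t}
  zero_mem' := ⟨0, R.zero_mem, 0, by ring⟩
  one_mem' := ⟨1, R.one_mem, 0, by ring⟩
  add_mem' := by
    rintro x y ⟨r, hr, t, rfl⟩ ⟨r', hr', t', rfl⟩
    exact ⟨r + r', R.add_mem hr hr', t + t', by ring⟩
  neg_mem' := by
    rintro x ⟨r, hr, t, rfl⟩
    exact ⟨-r, R.neg_mem hr, -t, by ring⟩
  mul_mem' := by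
    rintro x y ⟨r, hr, t, rfl⟩ ⟨r', hr', t', rfl⟩
    exact ⟨r * r', R.mul_mem hr hr', r * t' + r' * t + (a : T) * t * t', by ring⟩

/-- If `R ⊂ T` is a minimal ring extension, the conductor `(R : T)` is a prime ideal
of `R`. -/
theorem stmt_16 (T : Type*) [CommRing T] (R : Subring T) (hmin : IsCoatom R) :
    (conductorIdeal R).IsPrime := by
  constructor
  · intro h
    apply hmin.1
    rw [Ideal.eq_top_iff_one] at h
    ext t
    simp only [Subring.mem_top, iff_true]
    simpa using (mem_conductorIdeal.mp h) t
  · intro a b hab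
    by_cases ha : a ∈ conductorIdeal R
    · exact Or.inl ha
    right
    rw [mem_conductorIdeal] at ha
    push_neg at ha
    obtain ⟨t0, ht0⟩ := ha
    -- R + aT strictly contains R
    have hlt : R < adjoinMul R a := by
      constructor
      · intro x hx
        exact ⟨x, hx, 0, by ring⟩
      · intro hle
        exact ht0 (hle ⟨0, R.zero_mem, t0, by ring⟩)
    have htop : adjoinMul R a = ⊤ := hmin.2 _ hlt
    rw [mem_conductorIdeal]
    intro t
    have : t ∈ adjoinMul R a := htop ▸ Subring.mem_top t
    obtain ⟨r, hr, t', rfl⟩ := this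
    have h1 : (b : T) * r ∈ R := R.mul_mem b.2 hr
    have h2 : ((a : T) * (b : T)) * t' ∈ R := by
      have := (mem_conductorIdeal.mp hab) t'
      simpa using this
    have : (b : T) * (r + (a : T) * t') = (b : T) * r + ((a : T) * (b : T)) * t' := by ring
    rw [this]
    exact R.add_mem h1 h2
end

section
/- Let R be a von Neumann regular commutative ring and R ⊂ T a minimal ring extension with T not reduced. Then T contains a nonzero element q with q² = 0, and (letting m = (R : T)) T is generated over R by such a q with mq = 0. -/
/-- If `R` is von Neumann regular and `R ⊂ T` a minimal ring extension with `T` not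
reduced, then `T = R[q]` for some nonzero `q` with `q² = 0` killed by the conductor
`m = (R : T)`. -/
theorem stmt_17 (T : Type*) [CommRing T] (R : Subring T)
    (hmin : IsCoatom R)
    (hvnr : ∀ a : R, ∃ x : R, a = a * a * x)
    (hT : ¬IsReduced T) :
    ∃ q : T, q ≠ 0 ∧ q ^ 2 = 0 ∧
      Subring.closure ((R : Set T) ∪ {q}) = ⊤ ∧
      ∀ r : T, (∀ t : T, r * t ∈ R) → r * q = 0 := by
  classical
  -- R is reduced
  have hred : ∀ a : T, a ∈ R → a ^ 2 = 0 → a = 0 := by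
    intro a ha h2
    obtain ⟨x, hx⟩ := hvnr ⟨a, ha⟩
    have h1 : a = a * a * (x : T) := congrArg Subtype.val hx
    have haa : a * a = 0 := by rw [← pow_two]; exact h2
    rw [h1, haa, zero_mul]
  -- get a nonzero nilpotent
  rw [isReduced_iff] at hT
  push_neg at hT
  obtain ⟨t, htn, ht0⟩ := hT
  have hex : ∃ n, t ^ n = 0 := htn
  set N := Nat.find hex with hN
  have hNzero : t ^ N = 0 := Nat.find_spec hex
  have hN2 : 2 ≤ N := by
    by_contra h
    push_neg at h
    interval_cases N
    · apply ht0
      have h1 : (1 : T) = 0 := by simpa using hNzero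
      calc t = t * 1 := (mul_one t).symm
        _ = 0 := by rw [h1, mul_zero]
    · exact ht0 (by simpa using hNzero)
  set q : T := t ^ (N - 1) with hq
  have hq0 : q ≠ 0 := Nat.find_min hex (by omega)
  have hq2 : q ^ 2 = 0 := by
    rw [hq, ← pow_mul]
    have : (N - 1) * 2 = N + (N - 2) := by omega
    rw [this, pow_add, hNzero, zero_mul]
  have hqR : q ∉ R := fun hmem => hq0 (hred q hmem hq2)
  refine ⟨q, hq0, hq2, ?_, ?_⟩
  · apply hmin.2
    refine lt_of_le_of_ne ?_ ?_
    · intro x hx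
      exact Subring.subset_closure (Set.mem_union_left _ hx)
    · intro heq
      exact hqR (heq ▸ Subring.subset_closure (Set.mem_union_right _ rfl))
  · intro r hr
    exact hred (r * q) (hr q) (by rw [mul_pow, hq2, mul_zero])
end

section
/- Let R be a commutative ring and m a maximal ideal of R. Then the idealization R(+)(R/m) is a minimal ring extension of R (embedded via r ↦ (r, 0)): R × {0} is a maximal subring of R(+)(R/m). -/
theorem aux_unit_mul {R : Type*} [CommRing R] {m : Ideal R} (hm : m.IsMaximal)
    {a : R ⧸ m} (ha : a ≠ 0) (e : R ⧸ m) : ∃ c : R, Ideal.Quotient.mk m c * a = e := by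
  obtain ⟨b, rfl⟩ := Ideal.Quotient.mk_surjective a
  obtain ⟨f, rfl⟩ := Ideal.Quotient.mk_surjective e
  have hb : b ∉ m := fun h => ha (Ideal.Quotient.eq_zero_iff_mem.mpr h)
  obtain ⟨u, c, hc, h1⟩ := hm.exists_inv hb
  have key : Ideal.Quotient.mk m (u * b) = 1 := by
    have h2 := congrArg (Ideal.Quotient.mk m) h1
    rwa [map_add, Ideal.Quotient.eq_zero_iff_mem.mpr hc, add_zero, map_one] at h2
  exact ⟨f * u, by rw [map_mul, mul_assoc, ← map_mul, key, mul_one]⟩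

/-- For a maximal ideal `m` of `R`, the idealization `R(+)(R/m)` is a minimal ring
extension of `R`: the image of `R` under `r ↦ (r, 0)` is a maximal subring. -/
theorem stmt_19 (R : Type*) [CommRing R] (m : Ideal R) (hm : m.IsMaximal) :
    IsCoatom ((TrivSqZeroExt.inlHom R (R ⧸ m)).range :
      Subring (TrivSqZeroExt R (R ⧸ m))) := by
  have hmem : ∀ x : TrivSqZeroExt R (R ⧸ m),
      x ∈ (TrivSqZeroExt.inlHom R (R ⧸ m)).range ↔ x.snd = 0 := by
    intro x
    constructor
    · rintro ⟨r, rfl⟩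
      simp
    · intro h
      exact ⟨x.fst, by ext <;> simp [h]⟩
  constructor
  · intro h
    have h1 : (TrivSqZeroExt.inr 1 : TrivSqZeroExt R (R ⧸ m)) ∈
        (TrivSqZeroExt.inlHom R (R ⧸ m)).range := h ▸ Subring.mem_top _
    rw [hmem, TrivSqZeroExt.snd_inr] at h1
    have h2 : (1 : R) ∈ m := by rwa [← Ideal.Quotient.eq_zero_iff_mem, map_one]
    exact hm.ne_top ((Ideal.eq_top_iff_one m).mpr h2)
  · intro S hS
    obtain ⟨hle, x, hxS, hxR⟩ := SetLike.lt_iff_le_and_exists.mp hS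
    rw [hmem] at hxR
    have hinl : ∀ r : R, (TrivSqZeroExt.inl r : TrivSqZeroExt R (R ⧸ m)) ∈ S :=
      fun r => hle ⟨r, rfl⟩
    have hxr : (TrivSqZeroExt.inr x.snd : TrivSqZeroExt R (R ⧸ m)) ∈ S := by
      have hsub := S.sub_mem hxS (hinl x.fst)
      have hx : x - TrivSqZeroExt.inl x.fst = TrivSqZeroExt.inr x.snd := by
        ext <;> simp
      rwa [hx] at hsub
    have hinr : ∀ e : R ⧸ m, (TrivSqZeroExt.inr e : TrivSqZeroExt R (R ⧸ m)) ∈ S := by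
      intro e
      obtain ⟨c, hc⟩ := aux_unit_mul hm hxR e
      have heq : (TrivSqZeroExt.inl c : TrivSqZeroExt R (R ⧸ m)) * TrivSqZeroExt.inr x.snd
          = TrivSqZeroExt.inr e := by
        rw [TrivSqZeroExt.inl_mul_inr]
        exact congrArg TrivSqZeroExt.inr (by rw [← hc]; rfl)
      exact heq ▸ S.mul_mem (hinl c) hxr
    ext y
    simp only [Subring.mem_top, iff_true]
    have hy : y = TrivSqZeroExt.inl y.fst + TrivSqZeroExt.inr y.snd := by ext <;> simp
    rw [hy]
    exact S.add_mem (hinl y.fst) (hinr y.snd)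
end
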